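/- arXiv:2402.09568 — 3 statements merged into one kernel-verified Lean document; each statement's English description precedes it below -/
import Mathlib

section
/- Let n and k be positive integers and z a k-coloring of {1,…,n}. A vector γ ∈ ℤ^P satisfies γ ∈ ker_ℤ DC_{n,z} and ‖γ‖₁ = 4 if and only if there exist pairwise distinct vertices u, v, u', v' ∈ {1,…,n} with z(u) = z(u') or z(v) = z(v') such that γ is the 4-cycle [u v u' v'], i.e., γ has entries +1 at {u,v} and {u',v'}, entries −1 at {v,u'} and {v',u}, and 0 elsewhere. -/
open Finset

/-- The set `P` of 2-element subsets of `{1,…,n}`, encoded as ordered pairs. -/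
abbrev Edge (n : ℕ) : Type := {p : Fin n × Fin n // p.1 < p.2}

/-- Entry `γ_{uv}` of a vector `γ ∈ ℤ^P` at the unordered pair `{u,v}` (0 when `u = v`). -/
def ent {n : ℕ} (γ : Edge n → ℤ) (u v : Fin n) : ℤ :=
  if h : u < v then γ ⟨(u, v), h⟩ else if h : v < u then γ ⟨(v, u), h⟩ else 0

/-- Entry at `{u,v}` of a vector in `ℕ^P`. -/
def entN {n : ℕ} (x : Edge n → ℕ) (u v : Fin n) : ℕ :=
  if h : u < v then x ⟨(u, v), h⟩ else if h : v < u then x ⟨(v, u), h⟩ else 0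

/-- Degree sequence: `d(γ)_u = ∑_{v ≠ u} γ_{uv}`. -/
def degSeq {n : ℕ} (γ : Edge n → ℤ) (u : Fin n) : ℤ := ∑ v, ent γ u v

/-- Color sequence: `c(γ)_{ij} = ∑ γ_{uv}` over `{u,v} ∈ P` with `{z u, z v} = {i,j}`. -/
def colorSeq {n k : ℕ} (z : Fin n → Fin k) (γ : Edge n → ℤ) (i j : Fin k) : ℤ :=
  ∑ e : Edge n,
    if (z e.1.1 = i ∧ z e.1.2 = j) ∨ (z e.1.1 = j ∧ z e.1.2 = i) then γ e else 0

/-- `γ ∈ ker_ℤ DC_{n,z}`: both the degree sequence and the color sequence vanish. -/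
def inKer {n k : ℕ} (z : Fin n → Fin k) (γ : Edge n → ℤ) : Prop :=
  (∀ u, degSeq γ u = 0) ∧ ∀ i j, colorSeq z γ i j = 0

/-- The 1-norm `‖γ‖₁ = ∑_{e ∈ P} |γ_e|`. -/
def norm1 {n : ℕ} (γ : Edge n → ℤ) : ℤ := ∑ e, |γ e|

/-- The set of moves `M_{n,z} = {γ ∈ ker_ℤ DC_{n,z} : ‖γ‖₁ = 4}`. -/
def MSet {n k : ℕ} (z : Fin n → Fin k) : Set (Edge n → ℤ) :=
  {γ | inKer z γ ∧ norm1 γ = 4}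

/-- Degree sequence of a vector in `ℕ^P`. -/
def degSeqN {n : ℕ} (x : Edge n → ℕ) (u : Fin n) : ℕ := ∑ v, entN x u v

/-- Color sequence of a vector in `ℕ^P`. -/
def colorSeqN {n k : ℕ} (z : Fin n → Fin k) (x : Edge n → ℕ) (i j : Fin k) : ℕ :=
  ∑ e : Edge n,
    if (z e.1.1 = i ∧ z e.1.2 = j) ∨ (z e.1.1 = j ∧ z e.1.2 = i) then x e else 0

/-- The fiber `F(b) = {x ∈ ℕ^P : DC_{n,z} x = b}`, where `b = (d; c)`. -/
def Fiber {n k : ℕ} (z : Fin n → Fin k) (d : Fin n → ℤ) (c : Fin k → Fin k → ℤ) :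
    Set (Edge n → ℕ) :=
  {x | (∀ u, (degSeqN x u : ℤ) = d u) ∧ ∀ i j, (colorSeqN z x i j : ℤ) = c i j}

/-- The simple fiber `F̃(b) = F(b) ∩ {0,1}^P`. -/
def SimpleFiber {n k : ℕ} (z : Fin n → Fin k) (d : Fin n → ℤ) (c : Fin k → Fin k → ℤ) :
    Set (Edge n → ℕ) :=
  {x | x ∈ Fiber z d c ∧ ∀ e, x e ≤ 1}

/-- The difference `x − x' ∈ ℤ^P` of two vectors in `ℕ^P`. -/
def diff {n : ℕ} (x x' : Edge n → ℕ) : Edge n → ℤ := fun e => (x e : ℤ) - (x' e : ℤ)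

/-- Indicator vector of the unordered pair `{a,b}`. -/
def ind {n : ℕ} (a b : Fin n) : Edge n → ℤ := fun e =>
  if (e.1.1 = a ∧ e.1.2 = b) ∨ (e.1.1 = b ∧ e.1.2 = a) then 1 else 0

/-- The 4-cycle `[u v u' v']`: entries `+1` at `{u,v}`, `{u',v'}` and `−1` at `{v,u'}`, `{v',u}`. -/
def cycle4 {n : ℕ} (u v u' v' : Fin n) : Edge n → ℤ :=
  fun e => ind u v e + ind u' v' e - ind v u' e - ind v' u e

section Base
variable {n : ℕ}

lemma ent_self (γ : Edge n → ℤ) (u : Fin n) : ent γ u u = 0 := by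
  simp [ent]

lemma ent_symm (γ : Edge n → ℤ) (u v : Fin n) : ent γ u v = ent γ v u := by
  unfold ent
  rcases lt_trichotomy u v with h | h | h
  · simp [h, h.asymm]
  · simp [h, lt_irrefl]
  · simp [h, h.asymm]

lemma ent_mk (γ : Edge n → ℤ) (e : Edge n) : ent γ e.1.1 e.1.2 = γ e := by
  simp [ent, e.2]

/-- The edge for an unordered pair of distinct vertices. -/
def mkE (a b : Fin n) (h : a ≠ b) : Edge n :=
  if hlt : a < b then ⟨(a, b), hlt⟩ else ⟨(b, a), (h.lt_or_gt.resolve_left hlt)⟩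

lemma gamma_mkE (γ : Edge n → ℤ) {a b : Fin n} (h : a ≠ b) :
    γ (mkE a b h) = ent γ a b := by
  unfold mkE ent
  rcases h.lt_or_gt with h1 | h1 <;> simp [h1, h1.asymm]

lemma eq_mkE_iff {a b : Fin n} (h : a ≠ b) (e : Edge n) :
    e = mkE a b h ↔ ((e.1.1 = a ∧ e.1.2 = b) ∨ (e.1.1 = b ∧ e.1.2 = a)) := by
  obtain ⟨⟨x, y⟩, hxy⟩ := e
  unfold mkE
  rcases h.lt_or_gt with h1 | h1 <;>
      simp only [h1, h1.asymm, dif_pos, dif_neg, not_lt_of_gt, Subtype.ext_iff,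
        Prod.ext_iff] <;> simp only [Subtype.mk.injEq] at hxy ⊢ <;>
      constructor <;> intro hh
  · exact Or.inl hh
  · rcases hh with hh | ⟨h2, h3⟩
    · exact hh
    · subst h2; subst h3; exact absurd hxy h1.asymm
  · exact Or.inr hh
  · rcases hh with ⟨h2, h3⟩ | hh
    · subst h2; subst h3; exact absurd hxy h1.asymm
    · exact hh

lemma mkE_eq_iff {a b c d : Fin n} (hab : a ≠ b) (hcd : c ≠ d) :
    mkE a b hab = mkE c d hcd ↔ ((a = c ∧ b = d) ∨ (a = d ∧ b = c)) := by
  rw [eq_mkE_iff hcd]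
  unfold mkE
  rcases hab.lt_or_gt with h1 | h1 <;> simp [h1, h1.asymm] <;> tauto

lemma ind_eq {a b : Fin n} (h : a ≠ b) (e : Edge n) :
    ind a b e = (if e = mkE a b h then 1 else 0 : ℤ) := by
  rw [ind]
  by_cases hc : (e.1.1 = a ∧ e.1.2 = b) ∨ (e.1.1 = b ∧ e.1.2 = a)
  · rw [if_pos hc, if_pos ((eq_mkE_iff h e).2 hc)]
  · rw [if_neg hc, if_neg (fun he => hc ((eq_mkE_iff h e).1 he))]

end Base
section Comp
variable {n k : ℕ}

lemma ent_ind {a b : Fin n} (h : a ≠ b) (w x : Fin n) :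
    ent (ind a b) w x = (if (w = a ∧ x = b) ∨ (w = b ∧ x = a) then 1 else 0 : ℤ) := by
  unfold ent ind
  rcases lt_trichotomy w x with h1 | h1 | h1
  · simp only [h1, dif_pos]
  · subst h1
    simp only [lt_irrefl, dif_neg, not_lt_of_gt, if_neg, not_false_iff]
    have : ¬((w = a ∧ w = b) ∨ (w = b ∧ w = a)) := by
      rintro (⟨rfl, rfl⟩ | ⟨rfl, rfl⟩) <;> exact h rfl
    rw [if_neg this]
  · simp only [h1, h1.asymm, dif_pos, dif_neg, not_lt_of_gt]
    exact if_congr (by tauto) rfl rfl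

lemma sum_ent_ind {a b : Fin n} (h : a ≠ b) (w : Fin n) :
    ∑ x, ent (ind a b) w x
      = (if w = a then 1 else 0 : ℤ) + (if w = b then 1 else 0) := by
  have key : ∀ x, ent (ind a b) w x
      = (if w = a then (if x = b then 1 else 0 : ℤ) else 0)
        + (if w = b then (if x = a then 1 else 0) else 0) := by
    intro x
    rw [ent_ind h]
    by_cases hwa : w = a <;> by_cases hwb : w = b <;>
      simp_all <;> tauto
  simp_rw [key]
  rw [Finset.sum_add_distrib]
  congr 1 <;> split_ifs <;> simp

lemma ent_cycle4 (u v u' v' w x : Fin n) :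
    ent (cycle4 u v u' v') w x
      = ent (ind u v) w x + ent (ind u' v') w x
        - ent (ind v u') w x - ent (ind v' u) w x := by
  unfold ent cycle4
  split_ifs <;> simp

lemma degSeq_cycle4 {u v u' v' : Fin n} (huv : u ≠ v) (hu'v' : u' ≠ v')
    (hvu' : v ≠ u') (hv'u : v' ≠ u) (w : Fin n) :
    degSeq (cycle4 u v u' v') w = 0 := by
  unfold degSeq
  simp_rw [ent_cycle4]
  rw [Finset.sum_sub_distrib, Finset.sum_sub_distrib, Finset.sum_add_distrib,
    sum_ent_ind huv, sum_ent_ind hu'v', sum_ent_ind hvu', sum_ent_ind hv'u]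
  split_ifs <;> ring

/-- color indicator -/
def Qv {k : ℕ} (a b i j : Fin k) : ℤ :=
  if (a = i ∧ b = j) ∨ (a = j ∧ b = i) then 1 else 0

lemma Qv_symm (a b i j : Fin k) : Qv a b i j = Qv b a i j := by
  unfold Qv; exact if_congr (by tauto) rfl rfl

lemma Qv_nonneg (a b i j : Fin k) : 0 ≤ Qv a b i j := by
  unfold Qv; split_ifs <;> norm_num

lemma colorSeq_ind (z : Fin n → Fin k) {a b : Fin n} (h : a ≠ b) (i j : Fin k) :
    colorSeq z (ind a b) i j = Qv (z a) (z b) i j := by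
  unfold colorSeq
  simp_rw [ind_eq h]
  have key : ∀ e : Edge n,
      (if (z e.1.1 = i ∧ z e.1.2 = j) ∨ (z e.1.1 = j ∧ z e.1.2 = i) then
        (if e = mkE a b h then 1 else 0 : ℤ) else 0)
      = if e = mkE a b h then Qv (z a) (z b) i j else 0 := by
    intro e
    by_cases he : e = mkE a b h
    · subst he
      rw [if_pos rfl]
      have hcond : ((z (mkE a b h).1.1 = i ∧ z (mkE a b h).1.2 = j) ∨
          (z (mkE a b h).1.1 = j ∧ z (mkE a b h).1.2 = i))
          ↔ ((z a = i ∧ z b = j) ∨ (z a = j ∧ z b = i)) := by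
        unfold mkE
        rcases h.lt_or_gt with h1 | h1
        · rw [dif_pos h1]
        · rw [dif_neg (not_lt_of_gt h1)]
          constructor <;> rintro (⟨p, q⟩ | ⟨p, q⟩) <;> simp_all <;> tauto
      have : (if (z (mkE a b h).1.1 = i ∧ z (mkE a b h).1.2 = j) ∨
          (z (mkE a b h).1.1 = j ∧ z (mkE a b h).1.2 = i) then (1 : ℤ) else 0)
          = Qv (z a) (z b) i j := by
        unfold Qv; exact if_congr hcond rfl rfl
      rw [← this]
      split_ifs with hh1 hh2 <;> first | rfl | exact absurd rfl (by assumption)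
    · simp [he]
  simp_rw [key]
  simp

lemma colorSeq_cycle4 (z : Fin n → Fin k) (u v u' v' : Fin n) (i j : Fin k) :
    colorSeq z (cycle4 u v u' v') i j
      = colorSeq z (ind u v) i j + colorSeq z (ind u' v') i j
        - colorSeq z (ind v u') i j - colorSeq z (ind v' u) i j := by
  unfold colorSeq cycle4
  rw [← Finset.sum_add_distrib, ← Finset.sum_sub_distrib, ← Finset.sum_sub_distrib]
  exact Finset.sum_congr rfl fun e _ => by split_ifs <;> ring

lemma colorSeq_cycle4_eval (z : Fin n → Fin k) {u v u' v' : Fin n}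
    (huv : u ≠ v) (hu'v' : u' ≠ v') (hvu' : v ≠ u') (hv'u : v' ≠ u) (i j : Fin k) :
    colorSeq z (cycle4 u v u' v') i j
      = Qv (z u) (z v) i j + Qv (z u') (z v') i j
        - Qv (z v) (z u') i j - Qv (z v') (z u) i j := by
  rw [colorSeq_cycle4, colorSeq_ind z huv, colorSeq_ind z hu'v',
    colorSeq_ind z hvu', colorSeq_ind z hv'u]

lemma norm1_cycle4 {u v u' v' : Fin n}
    (huv : u ≠ v) (huu' : u ≠ u') (huv' : u ≠ v') (hvu' : v ≠ u') (hvv' : v ≠ v')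
    (hu'v' : u' ≠ v') :
    norm1 (cycle4 u v u' v') = 4 := by
  have hv'u : v' ≠ u := huv'.symm
  set E1 := mkE u v huv with hE1
  set E2 := mkE u' v' hu'v' with hE2
  set E3 := mkE v u' hvu' with hE3
  set E4 := mkE v' u hv'u with hE4
  have h12 : E1 ≠ E2 := by rw [hE1, hE2, Ne, mkE_eq_iff]; tauto
  have h13 : E1 ≠ E3 := by rw [hE1, hE3, Ne, mkE_eq_iff]; tauto
  have h14 : E1 ≠ E4 := by rw [hE1, hE4, Ne, mkE_eq_iff]; tauto
  have h23 : E2 ≠ E3 := by rw [hE2, hE3, Ne, mkE_eq_iff]; tauto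
  have h24 : E2 ≠ E4 := by rw [hE2, hE4, Ne, mkE_eq_iff]; tauto
  have h34 : E3 ≠ E4 := by rw [hE3, hE4, Ne, mkE_eq_iff]; tauto
  have key : ∀ e : Edge n, |cycle4 u v u' v' e|
      = (if e = E1 then 1 else 0 : ℤ) + (if e = E2 then 1 else 0)
        + (if e = E3 then 1 else 0) + (if e = E4 then 1 else 0) := by
    intro e
    rw [cycle4, ind_eq huv, ind_eq hu'v', ind_eq hvu', ind_eq hv'u]
    rw [← hE1, ← hE2, ← hE3, ← hE4]
    split_ifs <;> simp_all
  unfold norm1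
  simp_rw [key]
  rw [Finset.sum_add_distrib, Finset.sum_add_distrib, Finset.sum_add_distrib]
  simp

end Comp
section Struct
variable {n : ℕ}

lemma sum_three_ind {α : Type*} [Fintype α] [DecidableEq α] {a b c : α}
    (hab : a ≠ b) (hac : a ≠ c) (hbc : b ≠ c) (x y w : ℤ) :
    ∑ t, (if t = a then x else if t = b then y else if t = c then w else 0)
      = x + y + w := by
  have key : ∀ t, (if t = a then x else if t = b then y else if t = c then w else 0)
      = (if t = a then x else 0) + (if t = b then y else 0) + (if t = c then w else 0) := by
    intro t; split_ifs <;> simp_all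
  simp_rw [key]
  rw [Finset.sum_add_distrib, Finset.sum_add_distrib]
  simp

lemma sum_one_ind {α : Type*} [Fintype α] [DecidableEq α] (a : α) (x : ℤ) :
    ∑ t, (if t = a then x else 0) = x := by simp

lemma exists_neg_of_pos {γ : Edge n → ℤ} (hdeg : ∀ u, degSeq γ u = 0)
    {a b : Fin n} (hpos : 0 < ent γ a b) : ∃ x, ent γ a x < 0 := by
  by_contra hcon
  push_neg at hcon
  have h0 := hdeg a
  unfold degSeq at h0
  have : (0 : ℤ) < ∑ x, ent γ a x :=
    Finset.sum_pos' (fun i _ => hcon i) ⟨b, Finset.mem_univ b, hpos⟩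
  omega

lemma exists_pos_of_neg {γ : Edge n → ℤ} (hdeg : ∀ u, degSeq γ u = 0)
    {a b : Fin n} (hneg : ent γ a b < 0) : ∃ x, 0 < ent γ a x := by
  by_contra hcon
  push_neg at hcon
  have h0 := hdeg a
  unfold degSeq at h0
  have : ∑ x, ent γ a x < ∑ _x : Fin n, (0 : ℤ) :=
    Finset.sum_lt_sum (fun i _ => hcon i) ⟨b, Finset.mem_univ b, hneg⟩
  simp at this
  omega

set_option maxHeartbeats 1600000 in
lemma forward_struct {γ : Edge n → ℤ} (hdeg : ∀ u, degSeq γ u = 0)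
    (hnorm : norm1 γ = 4) :
    ∃ u v u' v' : Fin n,
      u ≠ v ∧ u ≠ u' ∧ u ≠ v' ∧ v ≠ u' ∧ v ≠ v' ∧ u' ≠ v' ∧ γ = cycle4 u v u' v' := by
  classical
  -- find a positive entry
  have hex : ∃ e, γ e ≠ 0 := by
    by_contra hc; push_neg at hc
    unfold norm1 at hnorm
    simp [hc] at hnorm
  obtain ⟨u, v, huv_pos⟩ : ∃ u v, 0 < ent γ u v := by
    obtain ⟨e, he⟩ := hex
    rcases he.lt_or_gt with h1 | h1
    · have : ent γ e.1.1 e.1.2 < 0 := by rwa [ent_mk]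
      obtain ⟨x, hx⟩ := exists_pos_of_neg hdeg this
      exact ⟨e.1.1, x, hx⟩
    · exact ⟨e.1.1, e.1.2, by rwa [ent_mk]⟩
  have huvne : u ≠ v := by rintro rfl; rw [ent_self] at huv_pos; exact lt_irrefl _ huv_pos
  -- chase
  obtain ⟨u', hvu'_neg⟩ := exists_neg_of_pos hdeg (show 0 < ent γ v u by rwa [← ent_symm])
  have hvu'ne : v ≠ u' := by rintro rfl; rw [ent_self] at hvu'_neg; exact lt_irrefl _ hvu'_neg
  have huu'ne : u ≠ u' := by
    rintro rfl; rw [ent_symm] at hvu'_neg; omega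
  obtain ⟨v', hu'v'_pos⟩ :=
    exists_pos_of_neg hdeg (show ent γ u' v < 0 by rwa [← ent_symm])
  have hu'v'ne : u' ≠ v' := by rintro rfl; rw [ent_self] at hu'v'_pos; exact lt_irrefl _ hu'v'_pos
  have hvv'ne : v ≠ v' := by
    rintro rfl; rw [ent_symm] at hu'v'_pos; omega
  obtain ⟨w, hv'w_neg⟩ :=
    exists_neg_of_pos hdeg (show 0 < ent γ v' u' by rwa [← ent_symm])
  have hv'wne : v' ≠ w := by rintro rfl; rw [ent_self] at hv'w_neg; exact lt_irrefl _ hv'w_neg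
  have hu'wne : u' ≠ w := by
    rintro rfl; rw [ent_symm] at hv'w_neg; omega
  -- the four edges
  set E1 := mkE u v huvne with hE1
  set E2 := mkE v u' hvu'ne with hE2
  set E3 := mkE u' v' hu'v'ne with hE3
  set E4 := mkE v' w hv'wne with hE4
  have h12 : E1 ≠ E2 := by rw [hE1, hE2, Ne, mkE_eq_iff]; tauto
  have h13 : E1 ≠ E3 := by rw [hE1, hE3, Ne, mkE_eq_iff]; tauto
  have h14 : E1 ≠ E4 := by
    rw [hE1, hE4, Ne, mkE_eq_iff]
    rintro (⟨rfl, rfl⟩ | ⟨rfl, rfl⟩)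
    · omega
    · exact hvv'ne rfl
  have h23 : E2 ≠ E3 := by rw [hE2, hE3, Ne, mkE_eq_iff]; tauto
  have h24 : E2 ≠ E4 := by rw [hE2, hE4, Ne, mkE_eq_iff]; tauto
  have h34 : E3 ≠ E4 := by rw [hE3, hE4, Ne, mkE_eq_iff]; tauto
  -- norm accounting
  set s : Finset (Edge n) := {E1, E2, E3, E4} with hs
  have hsplit : ∑ e ∈ (Finset.univ \ s), |γ e| + ∑ e ∈ s, |γ e| = ∑ e : Edge n, |γ e| :=
    Finset.sum_sdiff (Finset.subset_univ s)
  have hssum : ∑ e ∈ s, |γ e| = |γ E1| + |γ E2| + |γ E3| + |γ E4| := by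
    rw [hs]
    rw [Finset.sum_insert (by simp [h12, h13, h14]),
      Finset.sum_insert (by simp [h23, h24]),
      Finset.sum_insert (by simp [h34]), Finset.sum_singleton]
    ring
  have hv1 : γ E1 = ent γ u v := gamma_mkE γ huvne
  have hv2 : γ E2 = ent γ v u' := gamma_mkE γ hvu'ne
  have hv3 : γ E3 = ent γ u' v' := gamma_mkE γ hu'v'ne
  have hv4 : γ E4 = ent γ v' w := gamma_mkE γ hv'wne
  have hrest_nonneg : 0 ≤ ∑ e ∈ (Finset.univ \ s), |γ e| :=
    Finset.sum_nonneg fun e _ => abs_nonneg _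
  have hb1 : 1 ≤ |γ E1| := by rw [hv1, abs_of_pos huv_pos]; omega
  have hb2 : 1 ≤ |γ E2| := by rw [hv2, abs_of_neg hvu'_neg]; omega
  have hb3 : 1 ≤ |γ E3| := by rw [hv3, abs_of_pos hu'v'_pos]; omega
  have hb4 : 1 ≤ |γ E4| := by rw [hv4, abs_of_neg hv'w_neg]; omega
  unfold norm1 at hnorm
  rw [hnorm, hssum] at hsplit
  have hrest0 : ∑ e ∈ (Finset.univ \ s), |γ e| = 0 := by omega
  have habs1 : |γ E1| = 1 := by omega
  have habs2 : |γ E2| = 1 := by omega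
  have habs3 : |γ E3| = 1 := by omega
  have habs4 : |γ E4| = 1 := by omega
  have hzero : ∀ e, e ∉ s → γ e = 0 := by
    intro e he
    have := (Finset.sum_eq_zero_iff_of_nonneg fun e _ => abs_nonneg (γ e)).1 hrest0 e
      (by simp [he])
    exact abs_eq_zero.1 this
  have he1 : ent γ u v = 1 := by rw [← hv1]; rw [hv1, abs_of_pos huv_pos] at habs1; omega
  have he2 : ent γ v u' = -1 := by rw [← hv2]; rw [hv2, abs_of_neg hvu'_neg] at habs2; omega
  have he3 : ent γ u' v' = 1 := by rw [← hv3]; rw [hv3, abs_of_pos hu'v'_pos] at habs3; omega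
  have he4 : ent γ v' w = -1 := by rw [← hv4]; rw [hv4, abs_of_neg hv'w_neg] at habs4; omega
  -- u ≠ v'
  have huv'ne : u ≠ v' := by
    intro huv'
    have hwv : w ≠ v := by
      intro hwv
      rw [hwv, ← huv'] at he4
      omega
    have hwu : w ≠ u := by rintro rfl; rw [← huv'] at hv'wne; exact hv'wne rfl
    have key : ∀ x, ent γ u x
        = (if x = v then 1 else if x = u' then 1 else if x = w then -1 else 0 : ℤ) := by
      intro x
      by_cases hxv : x = v
      · subst hxv; rw [if_pos rfl]; exact he1
      rw [if_neg hxv]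
      by_cases hxu' : x = u'
      · subst hxu'; rw [if_pos rfl, ent_symm, huv']; exact he3
      rw [if_neg hxu']
      by_cases hxw : x = w
      · subst hxw; rw [if_pos rfl, huv']; exact he4
      rw [if_neg hxw]
      by_cases hxu : x = u
      · subst hxu; exact ent_self γ x
      have hux : u ≠ x := fun h => hxu h.symm
      rw [← gamma_mkE γ hux]
      apply hzero
      intro hmem
      rw [hs] at hmem
      simp only [Finset.mem_insert, Finset.mem_singleton] at hmem
      rcases hmem with h | h | h | h
      · rw [hE1, mkE_eq_iff] at h
        rcases h with ⟨h1, h2⟩ | ⟨h1, h2⟩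
        · exact hxv h2
        · exact huvne h1
      · rw [hE2, mkE_eq_iff] at h
        rcases h with ⟨h1, h2⟩ | ⟨h1, h2⟩
        · exact huvne h1
        · exact huu'ne h1
      · rw [hE3, mkE_eq_iff] at h
        rcases h with ⟨h1, h2⟩ | ⟨h1, h2⟩
        · exact huu'ne h1
        · exact hxu' h2
      · rw [hE4, mkE_eq_iff] at h
        rcases h with ⟨h1, h2⟩ | ⟨h1, h2⟩
        · exact hxw h2
        · exact hwu h1.symm
    have hd := hdeg u
    unfold degSeq at hd
    rw [Finset.sum_congr rfl fun x _ => key x] at hd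
    rw [sum_three_ind hvu'ne (fun h => hwv h.symm) hu'wne 1 1 (-1)] at hd
    omega
  -- w = u
  have hwu : w = u := by
    by_contra hwu
    have huw : u ≠ w := fun h => hwu h.symm
    have key : ∀ x, ent γ u x = (if x = v then 1 else 0 : ℤ) := by
      intro x
      by_cases hxv : x = v
      · subst hxv; rw [if_pos rfl]; exact he1
      rw [if_neg hxv]
      by_cases hxu : x = u
      · subst hxu; exact ent_self γ x
      have hux : u ≠ x := fun h => hxu h.symm
      rw [← gamma_mkE γ hux]
      apply hzero
      intro hmem
      rw [hs] at hmem
      simp only [Finset.mem_insert, Finset.mem_singleton] at hmem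
      rcases hmem with h | h | h | h
      · rw [hE1, mkE_eq_iff] at h
        rcases h with ⟨h1, h2⟩ | ⟨h1, h2⟩
        · exact hxv h2
        · exact huvne h1
      · rw [hE2, mkE_eq_iff] at h
        rcases h with ⟨h1, h2⟩ | ⟨h1, h2⟩
        · exact huvne h1
        · exact huu'ne h1
      · rw [hE3, mkE_eq_iff] at h
        rcases h with ⟨h1, h2⟩ | ⟨h1, h2⟩
        · exact huu'ne h1
        · exact huv'ne h1
      · rw [hE4, mkE_eq_iff] at h
        rcases h with ⟨h1, h2⟩ | ⟨h1, h2⟩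
        · exact huv'ne h1
        · exact huw h1
    have hd := hdeg u
    unfold degSeq at hd
    rw [Finset.sum_congr rfl fun x _ => key x, sum_one_ind v 1] at hd
    omega
  have hv'u : v' ≠ u := fun h => huv'ne h.symm
  have hE4' : E4 = mkE v' u hv'u := by
    rw [hE4, mkE_eq_iff]
    exact Or.inl ⟨rfl, hwu⟩
  have he4' : ent γ v' u = -1 := by rw [← hwu]; exact he4
  refine ⟨u, v, u', v', huvne, huu'ne, huv'ne, hvu'ne, hvv'ne, hu'v'ne, ?_⟩
  funext e
  rw [cycle4, ind_eq huvne, ind_eq hu'v'ne, ind_eq hvu'ne, ind_eq hv'u, ← hE1, ← hE2, ← hE3,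
    ← hE4']
  by_cases q1 : e = E1
  · subst q1; rw [if_pos rfl, if_neg h13, if_neg h12, if_neg h14, hv1, he1]; ring
  rw [if_neg q1]
  by_cases q3 : e = E3
  · subst q3; rw [if_pos rfl, if_neg (fun h => h23 h.symm), if_neg h34, hv3, he3]; ring
  rw [if_neg q3]
  by_cases q2 : e = E2
  · subst q2; rw [if_pos rfl, if_neg h24, hv2, he2]; ring
  rw [if_neg q2]
  by_cases q4 : e = E4
  · subst q4; rw [if_pos rfl, hv4, he4]; ring
  rw [if_neg q4]
  rw [hzero e (by rw [hs]; simp [q1, q2, q3, q4])]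
  ring

end Struct
/-- The elements of `M_{n,z}` are exactly the 4-cycles `[u v u' v']` on
pairwise distinct vertices with `z u = z u'` or `z v = z v'`. -/
theorem mem_MSet_iff_cycle4 (n k : ℕ) (hn : 0 < n) (hk : 0 < k)
    (z : Fin n → Fin k) (γ : Edge n → ℤ) :
    (inKer z γ ∧ norm1 γ = 4) ↔
      ∃ u v u' v' : Fin n,
        u ≠ v ∧ u ≠ u' ∧ u ≠ v' ∧ v ≠ u' ∧ v ≠ v' ∧ u' ≠ v' ∧
        (z u = z u' ∨ z v = z v') ∧ γ = cycle4 u v u' v' := by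
  constructor
  · rintro ⟨⟨hdeg, hcol⟩, hnorm⟩
    obtain ⟨u, v, u', v', huv, huu', huv', hvu', hvv', hu'v', hcyc⟩ :=
      forward_struct hdeg hnorm
    refine ⟨u, v, u', v', huv, huu', huv', hvu', hvv', hu'v', ?_, hcyc⟩
    by_contra hc
    push_neg at hc
    obtain ⟨hzu, hzv⟩ := hc
    have h0 := hcol (z u) (z v)
    rw [hcyc] at h0
    rw [colorSeq_cycle4_eval z huv hu'v' hvu' (fun h => huv' h.symm)] at h0
    have hQ1 : Qv (z u) (z v) (z u) (z v) = 1 := by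
      unfold Qv; rw [if_pos (Or.inl ⟨rfl, rfl⟩)]
    have hQ3 : Qv (z v) (z u') (z u) (z v) = 0 := by
      unfold Qv
      rw [if_neg]
      rintro (⟨h1, h2⟩ | ⟨h1, h2⟩)
      · exact hzu (h1 ▸ h2).symm
      · exact hzu h2.symm
    have hQ4 : Qv (z v') (z u) (z u) (z v) = 0 := by
      unfold Qv
      rw [if_neg]
      rintro (⟨h1, h2⟩ | ⟨h1, h2⟩)
      · exact hzv (h2 ▸ h1).symm
      · exact hzv h1.symm
    have hQ2 := Qv_nonneg (z u') (z v') (z u) (z v)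
    rw [hQ1, hQ3, hQ4] at h0
    omega
  · rintro ⟨u, v, u', v', huv, huu', huv', hvu', hvv', hu'v', hcol, rfl⟩
    have hv'u : v' ≠ u := fun h => huv' h.symm
    refine ⟨⟨fun w => degSeq_cycle4 huv hu'v' hvu' hv'u w, fun i j => ?_⟩,
      norm1_cycle4 huv huu' huv' hvu' hvv' hu'v'⟩
    rw [colorSeq_cycle4_eval z huv hu'v' hvu' hv'u]
    rcases hcol with h | h
    · rw [Qv_symm (z v) (z u'), ← h, Qv_symm (z v') (z u)]
      ring
    · rw [Qv_symm (z v) (z u'), Qv_symm (z v') (z u), ← h]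
      ring
end

section
/- Let n and k be positive integers, z a k-coloring of {1,…,n}, and K a field. Then the toric ideal I_{DC_{n,z}} = ker φ_β equals the ideal I_{M_{n,z}} of K[x_e : e ∈ P] generated by the binomials x^{γ⁺} − x^{γ⁻} with γ ∈ M_{n,z}. -/
open Finset

/-- The monomial map `φ_β : x_{uv} ↦ s_u s_v t_{z(u)z(v)}` defining the toric ideal. -/
noncomputable def phiBeta (K : Type*) [Field K] {n k : ℕ} (z : Fin n → Fin k) :
    MvPolynomial (Edge n) K →ₐ[K] MvPolynomial (Fin n ⊕ Fin k × Fin k) K :=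
  MvPolynomial.aeval fun e =>
    MvPolynomial.X (Sum.inl e.1.1) * MvPolynomial.X (Sum.inl e.1.2) *
      MvPolynomial.X (Sum.inr (min (z e.1.1) (z e.1.2), max (z e.1.1) (z e.1.2)))

/-- The exponent vector `γ⁺ = max(γ, 0)`. -/
noncomputable def expPos {n : ℕ} (γ : Edge n → ℤ) : Edge n →₀ ℕ :=
  Finsupp.equivFunOnFinite.symm fun e => (γ e).toNat

/-- The exponent vector `γ⁻ = max(−γ, 0)`. -/
noncomputable def expNeg {n : ℕ} (γ : Edge n → ℤ) : Edge n →₀ ℕ :=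
  Finsupp.equivFunOnFinite.symm fun e => (-γ e).toNat

/-- The binomial `x^{γ⁺} − x^{γ⁻}` associated to `γ ∈ ℤ^P`. -/
noncomputable def binom (K : Type*) [Field K] {n : ℕ} (γ : Edge n → ℤ) :
    MvPolynomial (Edge n) K :=
  MvPolynomial.monomial (expPos γ) (1 : K) - MvPolynomial.monomial (expNeg γ) (1 : K)

/-- The variable `x_{ab}` for an unordered pair `{a,b}` with `a ≠ b`. -/
noncomputable def edgeVar (K : Type*) [Field K] {n : ℕ} (a b : Fin n) :
    MvPolynomial (Edge n) K :=
  if h : a < b then MvPolynomial.X ⟨(a, b), h⟩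
  else if h : b < a then MvPolynomial.X ⟨(b, a), h⟩ else 1

/-!
The monomial map `φ_β` sends `x^a` to the monomial with exponent `DC_{n,z} a`, so its kernel is
spanned by the binomials `x^a - x^b` with `DC_{n,z} a = DC_{n,z} b`. It therefore suffices to
connect any two multigraphs `a`, `b` with the same degree and color sequences by swaps
`x_{UV} x_{WX} ↦ x_{UW} x_{VX}` with `z V = z W`, whose binomials are those of the moves in
`M_{n,z}`. We induct on `DC_{n,z} a`: a common edge of `a` and `b` can be removed. If there is
none, the equality of color counts lets one swap create a *corner*: a vertex `u` with an `a`-edge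
`uv` and a `b`-edge `uw` such that `z v = z w`. From a corner, the equality of degrees lets one
more swap, in `a` or in `b`, create a common edge.
-/

namespace MvPolynomial
variable {σ τ R : Type*} [CommRing R]

lemma mem_span_monomial_sub_of_map_eq_zero (W : (σ →₀ ℕ) → (τ →₀ ℕ))
    (ψ : MvPolynomial σ R →ₗ[R] MvPolynomial τ R)
    (hψ : ∀ s c, ψ (monomial s c) = monomial (W s) c) {f : MvPolynomial σ R} (hf : ψ f = 0) :
    f ∈ Submodule.span R {g | ∃ s t, W s = W t ∧ g = monomial s 1 - monomial t 1} := by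
  set S := Submodule.span R {g : MvPolynomial σ R | ∃ s t, W s = W t ∧
    g = monomial s 1 - monomial t 1}
  -- `ρ ∘ ψ` sends each monomial to a fixed representative of its fiber under `W`.
  let ρ := AddMonoidAlgebra.mapDomainLinearMap R R (Function.invFun W)
  have hρ : ∀ t (c : R), ρ (monomial t c) = monomial (Function.invFun W t) c := by
    simp [ρ, ← single_eq_monomial]
  suffices ∀ f, f - ρ (ψ f) ∈ S by simpa [hf] using this f
  intro f
  induction f using MvPolynomial.induction_on' with
  | monomial s c =>
    have hsub : monomial s c - monomial (Function.invFun W (W s)) c =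
        c • (monomial s 1 - monomial (Function.invFun W (W s)) (1 : R)) := by
      simp [smul_sub, smul_monomial]
    rw [hψ, hρ, hsub]
    exact S.smul_mem _
      (Submodule.subset_span ⟨s, _, (Function.invFun_eq ⟨s, rfl⟩).symm, rfl⟩)
  | add p q hp hq =>
    rw [map_add, map_add, add_sub_add_comm]
    exact S.add_mem hp hq

end MvPolynomial

def Ideal.monomialCon {σ R : Type*} [CommRing R] (I : Ideal (MvPolynomial σ R)) :
    AddCon (σ →₀ ℕ) where
  r a b := Ideal.Quotient.mk I (MvPolynomial.monomial a 1) =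
    Ideal.Quotient.mk I (MvPolynomial.monomial b 1)
  iseqv := ⟨fun _ => rfl, Eq.symm, Eq.trans⟩
  add' h₁ h₂ := by
    rw [← one_mul (1 : R), ← MvPolynomial.monomial_mul, ← MvPolynomial.monomial_mul, map_mul,
      map_mul, h₁, h₂]

section SortPair
variable {α : Type*} [LinearOrder α]

def sortPair (a b : α) : α × α := (min a b, max a b)

lemma sortPair_comm (a b : α) : sortPair a b = sortPair b a := by
  simp [sortPair, min_comm, max_comm]

lemma sortPair_eq_sortPair_iff {a b c d : α} :
    sortPair a b = sortPair c d ↔ (a = c ∧ b = d) ∨ (a = d ∧ b = c) := by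
  simp only [sortPair, Prod.mk.injEq, min_def, max_def]
  split_ifs <;> grind

end SortPair

section Edges
variable {n k : ℕ}

def mkEdge (u v : Fin n) (h : u ≠ v) : Edge n := ⟨sortPair u v, min_lt_max.2 h⟩

lemma mkEdge_comm {u v : Fin n} (h : u ≠ v) : mkEdge v u h.symm = mkEdge u v h :=
  Subtype.ext (sortPair_comm v u)

lemma mkEdge_fst_snd (e : Edge n) : mkEdge e.1.1 e.1.2 e.2.ne = e :=
  Subtype.ext (Prod.ext (min_eq_left e.2.le) (max_eq_right e.2.le))

lemma mkEdge_eq_mkEdge_iff {u v u' v' : Fin n} (h : u ≠ v) (h' : u' ≠ v') :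
    mkEdge u v h = mkEdge u' v' h' ↔ (u = u' ∧ v = v') ∨ (u = v' ∧ v = u') :=
  Subtype.ext_iff.trans sortPair_eq_sortPair_iff

def HasEdge (a : Edge n →₀ ℕ) (u v : Fin n) : Prop := ∃ h : u ≠ v, a (mkEdge u v h) ≠ 0

variable {a b : Edge n →₀ ℕ} {u v : Fin n}

lemma HasEdge.ne (h : HasEdge a u v) : u ≠ v := h.1

lemma HasEdge.symm (h : HasEdge a u v) : HasEdge a v u :=
  ⟨h.1.symm, by rw [mkEdge_comm]; exact h.2⟩

lemma hasEdge_of_ne_zero {e : Edge n} (h : a e ≠ 0) : HasEdge a e.1.1 e.1.2 :=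
  ⟨e.2.ne, by rwa [mkEdge_fst_snd]⟩

lemma HasEdge.mono (h : HasEdge a u v) (hab : a ≤ b) : HasEdge b u v :=
  ⟨h.1, fun h0 => h.2 (Nat.eq_zero_of_le_zero (h0 ▸ hab _))⟩

end Edges

section DesignMap
open Finsupp Sum
variable {n k : ℕ} (z : Fin n → Fin k)

noncomputable def dcCol (e : Edge n) : Fin n ⊕ Fin k × Fin k →₀ ℕ :=
  single (inl e.1.1) 1 + single (inl e.1.2) 1 + single (inr (sortPair (z e.1.1) (z e.1.2))) 1

/-- `dcMap z x` is `DC_{n,z} x`: its `inl u` entry is the degree of `u` and, for `i ≤ j`, its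
`inr (i, j)` entry is the number of edges with color pair `{i, j}`. -/
noncomputable def dcMap : (Edge n →₀ ℕ) →ₗ[ℕ] (Fin n ⊕ Fin k × Fin k →₀ ℕ) :=
  linearCombination ℕ (dcCol z)

variable {z}

lemma dcCol_mkEdge {u v : Fin n} (h : u ≠ v) :
    dcCol z (mkEdge u v h) =
      single (inl u) 1 + single (inl v) 1 + single (inr (sortPair (z u) (z v))) 1 := by
  rcases h.lt_or_gt with h | h
  · simp [dcCol, mkEdge, sortPair, h.le]
  · simp only [dcCol, mkEdge, sortPair, h.le, min_eq_right, max_eq_left, min_comm (z v),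
      max_comm (z v)]
    abel

lemma dcCol_inl (e : Edge n) (u : Fin n) :
    dcCol z e (inl u) = (if e.1.1 = u then 1 else 0) + (if e.1.2 = u then 1 else 0) := by
  simp [dcCol, single_apply]

lemma dcCol_inr (e : Edge n) (p : Fin k × Fin k) :
    dcCol z e (inr p) = if sortPair (z e.1.1) (z e.1.2) = p then 1 else 0 := by
  simp [dcCol, single_apply]

lemma dcMap_single (e : Edge n) (m : ℕ) : dcMap z (single e m) = m • dcCol z e :=
  linearCombination_single ℕ m e

lemma dcMap_apply (a : Edge n →₀ ℕ) (t : Fin n ⊕ Fin k × Fin k) :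
    dcMap z a t = ∑ e, a e * dcCol z e t := by
  simp [dcMap, linearCombination_apply, Finsupp.sum_fintype, Finsupp.finsetSum_apply]

lemma dcMap_apply_ne_zero_iff {a : Edge n →₀ ℕ} {t : Fin n ⊕ Fin k × Fin k} :
    dcMap z a t ≠ 0 ↔ ∃ e, a e ≠ 0 ∧ dcCol z e t ≠ 0 := by
  simp [dcMap_apply, Finset.sum_eq_zero_iff]

end DesignMap

section HasEdgeDC
open Finsupp Sum
variable {n k : ℕ} {z : Fin n → Fin k} {a b : Edge n →₀ ℕ}

lemma exists_hasEdge_iff {u : Fin n} : (∃ v, HasEdge a u v) ↔ dcMap z a (inl u) ≠ 0 := by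
  rw [dcMap_apply_ne_zero_iff]
  constructor
  · rintro ⟨v, huv, ha⟩
    exact ⟨_, ha, by simp [dcCol_mkEdge, single_apply]⟩
  · rintro ⟨e, ha, he⟩
    rw [dcCol_inl] at he
    by_cases h : e.1.1 = u
    · exact ⟨e.1.2, h ▸ hasEdge_of_ne_zero ha⟩
    · have h' : e.1.2 = u := by by_contra h'; simp [h, h'] at he
      exact ⟨e.1.1, h' ▸ (hasEdge_of_ne_zero ha).symm⟩

lemma exists_hasEdge_colors_iff {i j : Fin k} :
    (∃ u v, HasEdge a u v ∧ z u = i ∧ z v = j) ↔ dcMap z a (inr (sortPair i j)) ≠ 0 := by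
  rw [dcMap_apply_ne_zero_iff]
  constructor
  · rintro ⟨u, v, ⟨huv, ha⟩, rfl, rfl⟩
    exact ⟨_, ha, by simp [dcCol_mkEdge]⟩
  · rintro ⟨e, ha, he⟩
    rw [dcCol_inr, ne_eq, ite_eq_right_iff, not_forall, sortPair_eq_sortPair_iff] at he
    obtain ⟨⟨hi, hj⟩ | ⟨hj, hi⟩, -⟩ := he
    · exact ⟨_, _, hasEdge_of_ne_zero ha, hi, hj⟩
    · exact ⟨_, _, (hasEdge_of_ne_zero ha).symm, hi, hj⟩

lemma eq_zero_of_dcMap_eq_zero (h : dcMap z a = 0) : a = 0 := by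
  by_contra ha
  obtain ⟨e, he⟩ := Finsupp.ne_iff.mp ha
  exact exists_hasEdge_iff.mp ⟨_, hasEdge_of_ne_zero he⟩ (by rw [h]; rfl)

end HasEdgeDC

section Monomial
open MvPolynomial

lemma phiBeta_X (K : Type*) [Field K] {n k : ℕ} (z : Fin n → Fin k) (e : Edge n) :
    phiBeta K z (X e) = monomial (dcCol z e) 1 := by
  rw [phiBeta, aeval_X]
  simp only [X, monomial_mul, one_mul]
  rfl

lemma phiBeta_monomial (K : Type*) [Field K] {n k : ℕ} (z : Fin n → Fin k)
    (s : Edge n →₀ ℕ) (c : K) : phiBeta K z (monomial s c) = monomial (dcMap z s) c := by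
  induction s using Finsupp.induction with
  | zero => simp [← C_apply]
  | single_add e m s _ _ ih =>
    rw [monomial_single_add, map_mul, map_pow, ih, phiBeta_X, monomial_pow, monomial_mul,
      map_add, dcMap_single, one_pow, one_mul]

end Monomial

section Kernel
open Sum
variable {n k : ℕ} {z : Fin n → Fin k}

lemma sum_ite_val_eq {M : Type*} [AddCommMonoid M] (f : Edge n → M) (x : Fin n × Fin n) :
    ∑ e : Edge n, (if e.1 = x then f e else 0) = if h : x.1 < x.2 then f ⟨x, h⟩ else 0 := by
  split_ifs with h
  · have hx : ∀ e : Edge n, e.1 = x ↔ e = ⟨x, h⟩ := fun e =>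
      ⟨fun he => Subtype.ext he, fun he => he ▸ rfl⟩
    simp only [hx, Finset.sum_ite_eq', Finset.mem_univ, if_true]
  · exact Finset.sum_eq_zero fun e _ => if_neg fun (he : e.1 = x) => h (he ▸ e.2)

lemma ent_eq_sum (γ : Edge n → ℤ) (u v : Fin n) :
    ent γ u v =
      ∑ e, ((if e.1 = (u, v) then γ e else 0) + (if e.1 = (v, u) then γ e else 0)) := by
  rw [Finset.sum_add_distrib, sum_ite_val_eq, sum_ite_val_eq]
  rcases lt_trichotomy u v with h | rfl | h
  · simp [ent, h, h.not_gt]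
  · simp [ent]
  · simp [ent, h, h.not_gt]

lemma degSeq_eq_sum (z : Fin n → Fin k) (γ : Edge n → ℤ) (u : Fin n) :
    degSeq γ u = ∑ e, γ e * dcCol z e (inl u) := by
  simp only [degSeq, ent_eq_sum]
  rw [Finset.sum_comm]
  refine Finset.sum_congr rfl fun e _ => ?_
  simp [Finset.sum_add_distrib, Prod.ext_iff, dcCol_inl, mul_add, eq_comm, ite_and, and_comm]

lemma colorSeq_eq_sum (γ : Edge n → ℤ) (i j : Fin k) :
    colorSeq z γ i j = ∑ e, γ e * dcCol z e (inr (sortPair i j)) := by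
  refine Finset.sum_congr rfl fun e _ => ?_
  simp [dcCol_inr, sortPair_eq_sortPair_iff]

lemma dcCol_inr_eq_zero (e : Edge n) {i j : Fin k} (h : j < i) :
    dcCol z e (inr (i, j)) = 0 := by
  rw [dcCol_inr, if_neg]
  intro he
  simp only [sortPair, Prod.mk.injEq] at he
  obtain ⟨rfl, rfl⟩ := he
  exact h.not_ge min_le_max

lemma inKer_iff (γ : Edge n → ℤ) : inKer z γ ↔ ∀ t, ∑ e, γ e * dcCol z e t = 0 := by
  simp only [inKer, degSeq_eq_sum z, colorSeq_eq_sum]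
  refine ⟨fun ⟨hd, hc⟩ t => ?_, fun h => ⟨fun u => h _, fun i j => h _⟩⟩
  rcases t with u | ⟨i, j⟩
  · exact hd u
  · rcases le_or_gt i j with hij | hij
    · simpa [sortPair, hij] using hc i j
    · simp [dcCol_inr_eq_zero _ hij]

lemma inKer_sub_iff (p q : Edge n →₀ ℕ) :
    inKer z (fun e => (p e : ℤ) - q e) ↔ dcMap z p = dcMap z q := by
  simp only [inKer_iff, Finsupp.ext_iff, dcMap_apply, sub_mul, Finset.sum_sub_distrib,
    sub_eq_zero]
  exact forall_congr' fun t => by exact_mod_cast Iff.rfl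

lemma binom_sub (K : Type*) [Field K] (p q : Edge n →₀ ℕ) (hpq : ∀ e, p e = 0 ∨ q e = 0) :
    binom K (fun e => (p e : ℤ) - q e) =
      MvPolynomial.monomial p 1 - MvPolynomial.monomial q 1 := by
  have hpos : expPos (fun e => (p e : ℤ) - q e) = p := by
    ext e; rcases hpq e with h | h <;> simp [expPos, h]
  have hneg : expNeg (fun e => (p e : ℤ) - q e) = q := by
    ext e; rcases hpq e with h | h <;> simp [expNeg, h]
  rw [binom, hpos, hneg]

lemma norm1_sub (p q : Edge n →₀ ℕ) (hpq : ∀ e, p e = 0 ∨ q e = 0) :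
    norm1 (fun e => (p e : ℤ) - q e) = ∑ e, p e + ∑ e, q e := by
  push_cast
  rw [norm1, ← Finset.sum_add_distrib]
  refine Finset.sum_congr rfl fun e _ => ?_
  rcases hpq e with h | h <;> simp [h]

lemma phiBeta_binom_eq_zero (K : Type*) [Field K] {γ : Edge n → ℤ} (hγ : inKer z γ) :
    phiBeta K z (binom K γ) = 0 := by
  have hγ' : (fun e => (expPos γ e : ℤ) - expNeg γ e) = γ := by
    ext e; simp [expPos, expNeg]
  rw [← hγ', inKer_sub_iff] at hγ
  rw [binom, map_sub, phiBeta_monomial, phiBeta_monomial, hγ, sub_self]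

end Kernel

section Swap
open Finsupp
variable {n k : ℕ}

inductive Swap (z : Fin n → Fin k) : (Edge n →₀ ℕ) → (Edge n →₀ ℕ) → Prop
  | intro (U V W X : Fin n) (hUV : U ≠ V) (hUW : U ≠ W) (hUX : U ≠ X) (hVW : V ≠ W) (hVX : V ≠ X)
      (hWX : W ≠ X) (hz : z V = z W) :
      Swap z (single (mkEdge U V hUV) 1 + single (mkEdge W X hWX) 1)
        (single (mkEdge U W hUW) 1 + single (mkEdge V X hVX) 1)

variable {z : Fin n → Fin k} {p q : Edge n →₀ ℕ}

lemma Swap.dcMap_eq (h : Swap z p q) : dcMap z p = dcMap z q := by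
  obtain ⟨U, V, W, X, hUV, hUW, hUX, hVW, hVX, hWX, hz⟩ := h
  simp only [map_add, dcMap_single, dcCol_mkEdge, one_smul, hz]
  abel

lemma Swap.disjoint (h : Swap z p q) (e : Edge n) : p e = 0 ∨ q e = 0 := by
  obtain ⟨U, V, W, X, hUV, hUW, hUX, hVW, hVX, hWX, hz⟩ := h
  simp only [Finsupp.add_apply, single_apply]
  split_ifs <;> subst_vars <;> grind [mkEdge_eq_mkEdge_iff]

lemma Swap.sum_eq (h : Swap z p q) : ∑ e, p e = 2 ∧ ∑ e, q e = 2 := by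
  obtain ⟨U, V, W, X, hUV, hUW, hUX, hVW, hVX, hWX, hz⟩ := h
  simp [Finset.sum_add_distrib, single_apply]

lemma Swap.mem_MSet (h : Swap z p q) : (fun e => (p e : ℤ) - q e) ∈ MSet z := by
  refine ⟨(inKer_sub_iff p q).2 h.dcMap_eq, ?_⟩
  rw [norm1_sub p q h.disjoint, h.sum_eq.1, h.sum_eq.2]
  rfl

lemma dcMap_eq_of_addConGen_swap {a b : Edge n →₀ ℕ} (h : addConGen (Swap z) a b) :
    dcMap z a = dcMap z b :=
  (AddCon.addConGen_le (c := AddCon.ker (dcMap z)).2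
    fun _ _ hpq => (AddCon.ker_rel _).2 (Swap.dcMap_eq hpq)) h

end Swap

lemma addConGen_swap_le_monomialCon (K : Type*) [Field K] {n k : ℕ} (z : Fin n → Fin k) :
    addConGen (Swap z) ≤
      (Ideal.span {f : MvPolynomial (Edge n) K | ∃ γ ∈ MSet z, f = binom K γ}).monomialCon :=
  AddCon.addConGen_le.2 fun p q h => Ideal.Quotient.eq.2 <|
    Ideal.subset_span ⟨_, h.mem_MSet, (binom_sub K p q h.disjoint).symm⟩

section Combinatorics
open Finsupp
variable {n k : ℕ} {z : Fin n → Fin k} {a b : Edge n →₀ ℕ}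

lemma exists_hasEdge_of_dcMap_eq (h : dcMap z a = dcMap z b) {u v : Fin n}
    (ha : HasEdge a u v) : ∃ w, HasEdge b u w :=
  exists_hasEdge_iff.2 (h ▸ exists_hasEdge_iff.1 ⟨v, ha⟩)

lemma exists_hasEdge_colors_of_dcMap_eq (h : dcMap z a = dcMap z b) {u v : Fin n}
    (ha : HasEdge a u v) : ∃ u' v', HasEdge b u' v' ∧ z u' = z u ∧ z v' = z v :=
  exists_hasEdge_colors_iff.2 (h ▸ exists_hasEdge_colors_iff.1 ⟨u, v, ha, rfl, rfl⟩)

lemma exists_addConGen_swap_hasEdge {U V W X : Fin n} (hUW : U ≠ W) (hUX : U ≠ X) (hVW : V ≠ W)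
    (hVX : V ≠ X) (hz : z V = z W) (ha₁ : HasEdge a U V) (ha₂ : HasEdge a W X) :
    ∃ a', addConGen (Swap z) a a' ∧ HasEdge a' U W ∧ HasEdge a' V X := by
  obtain ⟨hUV, h₁⟩ := ha₁
  obtain ⟨hWX, h₂⟩ := ha₂
  have hswap := Swap.intro U V W X hUV hUW hUX hVW hVX hWX hz
  set p := single (mkEdge U V hUV) 1 + single (mkEdge W X hWX) 1
  set q := single (mkEdge U W hUW) 1 + single (mkEdge V X hVX) 1
  have hp : p ≤ a := by
    intro e
    simp only [p, Finsupp.add_apply, single_apply]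
    split_ifs <;> subst_vars <;> grind [mkEdge_eq_mkEdge_iff]
  refine ⟨a - p + q, ?_, HasEdge.mono ⟨hUW, by simp [q]⟩ le_add_self,
    HasEdge.mono ⟨hVX, by simp [q]⟩ le_add_self⟩
  conv_lhs => rw [← tsub_add_cancel_of_le hp]
  exact (addConGen (Swap z)).add (AddCon.refl _ _) (AddCon.le_addConGen _ _ hswap)

lemma exists_common_edge_of_corner (hdc : dcMap z a = dcMap z b)
    (hdisj : ∀ u v, HasEdge a u v → ¬HasEdge b u v) {u v w : Fin n} (hav : HasEdge a u v)
    (hbw : HasEdge b u w) (hz : z v = z w) :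
    ∃ a' b', addConGen (Swap z) a a' ∧ addConGen (Swap z) b b' ∧
      ∃ p q, HasEdge a' p q ∧ HasEdge b' p q := by
  have hvw : v ≠ w := by rintro rfl; exact hdisj _ _ hav hbw
  obtain ⟨y, hwy⟩ := exists_hasEdge_of_dcMap_eq hdc.symm hbw.symm
  have hyu : y ≠ u := by rintro rfl; exact hdisj _ _ hwy hbw.symm
  by_cases hyv : y = v
  · rw [hyv] at hwy
    obtain ⟨y', hvy'⟩ := exists_hasEdge_of_dcMap_eq hdc hav.symm
    have hy'u : y' ≠ u := by rintro rfl; exact hdisj _ _ hav.symm hvy'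
    have hy'w : y' ≠ w := by rintro rfl; exact hdisj _ _ hwy.symm hvy'
    obtain ⟨b', hbb', hb', -⟩ := exists_addConGen_swap_hasEdge hav.ne hy'u.symm hvw.symm
      hy'w.symm hz.symm hbw hvy'
    exact ⟨a, b', AddCon.refl _ _, hbb', u, v, hav, hb'⟩
  · obtain ⟨a', haa', ha', -⟩ := exists_addConGen_swap_hasEdge hbw.ne (Ne.symm hyu) hvw
      (Ne.symm hyv) hz hav hwy
    exact ⟨a', b, haa', AddCon.refl _ _, u, w, ha', hbw⟩

lemma exists_corner (hdc : dcMap z a = dcMap z b)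
    (hdisj : ∀ u v, HasEdge a u v → ¬HasEdge b u v) {U V : Fin n} (hUV : HasEdge a U V) :
    ∃ a' b', addConGen (Swap z) a a' ∧ addConGen (Swap z) b b' ∧
      ∃ u v w, HasEdge a' u v ∧ HasEdge b' u w ∧ z v = z w := by
  by_cases hc : ∃ u v w, HasEdge a u v ∧ HasEdge b u w ∧ z v = z w
  · exact ⟨a, b, AddCon.refl _ _, AddCon.refl _ _, hc⟩
  push Not at hc
  obtain ⟨b₁, hVb₁⟩ := exists_hasEdge_of_dcMap_eq hdc hUV.symm
  have hb₁U : b₁ ≠ U := by rintro rfl; exact hdisj _ _ hUV.symm hVb₁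
  -- `a` has an edge `WX` colored like the `b`-edge `V b₁`; one swap of it with `UV` (in `a`), or
  -- of `V b₁` with a `b`-edge at `U` (if `W = U`), creates a corner.
  obtain ⟨W, X, hWX, hzW, hzX⟩ := exists_hasEdge_colors_of_dcMap_eq hdc.symm hVb₁
  have hWV : W ≠ V := by rintro rfl; exact hc _ _ _ hWX hVb₁ hzX
  by_cases hWU : W = U
  · rw [hWU] at hWX hzW
    obtain ⟨y, hUy⟩ := exists_hasEdge_of_dcMap_eq hdc hUV
    have hyV : y ≠ V := by rintro rfl; exact hdisj _ _ hUV hUy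
    have hyb₁ : y ≠ b₁ := by rintro rfl; exact hc _ _ _ hWX hUy hzX
    obtain ⟨b', hbb', -, hb'⟩ := exists_addConGen_swap_hasEdge hyV hyb₁ hUV.ne hb₁U.symm hzW
      hUy.symm hVb₁
    exact ⟨a, b', AddCon.refl _ _, hbb', U, X, b₁, hWX, hb', hzX⟩
  · have hXU : X ≠ U := by rintro rfl; exact hc _ _ _ hUV.symm hVb₁ hzX
    have hXV : X ≠ V := by rintro rfl; exact hc _ _ _ hWX.symm hVb₁ (hzW.trans hzX)
    obtain ⟨a', haa', -, ha'⟩ := exists_addConGen_swap_hasEdge (Ne.symm hWU) (Ne.symm hXU)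
      (Ne.symm hWV) (Ne.symm hXV) hzW.symm hUV hWX
    exact ⟨a', b, haa', AddCon.refl _ _, V, X, b₁, ha', hVb₁, hzX⟩

lemma exists_common_edge (hdc : dcMap z a = dcMap z b) (ha : a ≠ 0) :
    ∃ a' b', addConGen (Swap z) a a' ∧ addConGen (Swap z) b b' ∧
      ∃ p q, HasEdge a' p q ∧ HasEdge b' p q := by
  by_cases hab : ∃ p q, HasEdge a p q ∧ HasEdge b p q
  · exact ⟨a, b, AddCon.refl _ _, AddCon.refl _ _, hab⟩
  push Not at hab
  obtain ⟨e, he⟩ := Finsupp.ne_iff.mp ha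
  obtain ⟨a₁, b₁, haa₁, hbb₁, u, v, w, hav, hbw, hz⟩ :=
    exists_corner hdc hab (hasEdge_of_ne_zero he)
  by_cases hab₁ : ∃ p q, HasEdge a₁ p q ∧ HasEdge b₁ p q
  · exact ⟨a₁, b₁, haa₁, hbb₁, hab₁⟩
  push Not at hab₁
  have hdc₁ : dcMap z a₁ = dcMap z b₁ := (dcMap_eq_of_addConGen_swap haa₁).symm.trans
    (hdc.trans (dcMap_eq_of_addConGen_swap hbb₁))
  obtain ⟨a₂, b₂, haa₂, hbb₂, h⟩ := exists_common_edge_of_corner hdc₁ hab₁ hav hbw hz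
  exact ⟨a₂, b₂, haa₁.trans haa₂, hbb₁.trans hbb₂, h⟩

end Combinatorics

theorem addConGen_swap_of_dcMap_eq {n k : ℕ} {z : Fin n → Fin k} {a b : Edge n →₀ ℕ}
    (h : dcMap z a = dcMap z b) : addConGen (Swap z) a b := by
  suffices ∀ w, ∀ a b : Edge n →₀ ℕ, dcMap z a = w → dcMap z b = w →
      addConGen (Swap z) a b from this _ a b rfl h.symm
  intro w
  induction w using WellFoundedLT.induction with
  | _ w ih =>
  intro a b ha hb
  rcases eq_or_ne a 0 with rfl | ha0
  · rw [eq_zero_of_dcMap_eq_zero (hb.trans (ha.symm.trans (map_zero _)))]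
    exact AddCon.refl _ _
  obtain ⟨a', b', haa', hbb', p, q, ⟨hpq, hap⟩, ⟨_, hbp⟩⟩ :=
    exists_common_edge (ha.trans hb.symm) ha0
  set s := Finsupp.single (mkEdge p q hpq) 1
  have hsa : s ≤ a' := Finsupp.single_le_iff.2 (Nat.one_le_iff_ne_zero.2 hap)
  have hsb : s ≤ b' := Finsupp.single_le_iff.2 (Nat.one_le_iff_ne_zero.2 hbp)
  have hwa : dcMap z (a' - s) + dcMap z s = w := by
    rw [← map_add, tsub_add_cancel_of_le hsa, ← dcMap_eq_of_addConGen_swap haa', ha]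
  have hwb : dcMap z (b' - s) + dcMap z s = w := by
    rw [← map_add, tsub_add_cancel_of_le hsb, ← dcMap_eq_of_addConGen_swap hbb', hb]
  have hs : 0 < dcMap z s := pos_iff_ne_zero.2 fun h0 => by
    simpa [s] using eq_zero_of_dcMap_eq_zero h0
  have hrest := ih _ (hwa ▸ lt_add_of_pos_right _ hs) (a' - s) (b' - s) rfl
    (add_right_cancel (hwb.trans hwa.symm))
  have hab' := (addConGen (Swap z)).add hrest (AddCon.refl _ s)
  rw [tsub_add_cancel_of_le hsa, tsub_add_cancel_of_le hsb] at hab'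
  exact haa'.trans (hab'.trans hbb'.symm)

theorem toric_ideal_eq_span_quadratic_binomials_general (n k : ℕ)
    (z : Fin n → Fin k) (K : Type*) [Field K] :
    Ideal.span {f : MvPolynomial (Edge n) K | ∃ γ ∈ MSet z, f = binom K γ} =
      RingHom.ker (phiBeta K z).toRingHom := by
  set J := Ideal.span {f : MvPolynomial (Edge n) K | ∃ γ ∈ MSet z, f = binom K γ}
  refine le_antisymm (Ideal.span_le.2 ?_) fun f hf => ?_
  · rintro _ ⟨γ, hγ, rfl⟩
    exact phiBeta_binom_eq_zero K hγ.1
  · have hspan : Submodule.span K {g | ∃ s t, dcMap z s = dcMap z t ∧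
        g = MvPolynomial.monomial s 1 - MvPolynomial.monomial t 1} ≤ J.restrictScalars K :=
      Submodule.span_le.2 fun _ ⟨_, _, hst, hg⟩ => hg ▸ Ideal.Quotient.eq.1
        (addConGen_swap_le_monomialCon K z (addConGen_swap_of_dcMap_eq hst))
    exact hspan (MvPolynomial.mem_span_monomial_sub_of_map_eq_zero (dcMap z)
      (phiBeta K z).toLinearMap (phiBeta_monomial K z) hf)

/-- The toric ideal `I_{DC_{n,z}} = ker φ_β` equals the ideal generated by
the binomials `x^{γ⁺} − x^{γ⁻}` with `γ ∈ M_{n,z}`. -/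
theorem toric_ideal_eq_span_quadratic_binomials (n k : ℕ) (hn : 0 < n) (hk : 0 < k)
    (z : Fin n → Fin k) (K : Type*) [Field K] :
    Ideal.span {f : MvPolynomial (Edge n) K | ∃ γ ∈ MSet z, f = binom K γ} =
      RingHom.ker (phiBeta K z).toRingHom :=
  toric_ideal_eq_span_quadratic_binomials_general n k z K
end

section
/- Fix an integer k ≥ 3, n = 2k, z(u) ≡ u (mod k), and (d_k; c_k) as specified. For every γ in the simple fiber F̃(d_k; c_k): if u ∈ {1,…,k}, v ∈ {1,…,2k}, and ε ∈ {1,−1} satisfy v ≡ u + ε (mod k) and γ_{(u+k)v} = 1, then γ_{uw} = 1 for every w ∈ {1,…,2k} with w ≡ u − ε (mod k). -/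
open Finset

/-!
Let `u' = u + k` be the partner of `u` in its colour class, and `j`, `j'` the classes of
`u + ε` and `u - ε`. The vertex `u'` has degree 1, spent on its edge to `v ∈ j`; since
`c(z u, j) = 2` counts the edges from both `u` and `u'` into class `j`, exactly one edge runs
from `u` into `j`. Every other colour count at `z u` vanishes except `c(z u, j')`, so the
remaining two edges at `u` (degree 3) go into class `j'`, which has only two vertices; as `γ`
is 0/1, `u` is joined to both.
-/
section Fiber

variable {n k : ℕ} (z : Fin n → Fin k) (x : Edge n → ℕ)

lemma entN_of_lt {a b : Fin n} (h : a < b) : entN x a b = x ⟨(a, b), h⟩ := dif_pos h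

lemma entN_comm (a b : Fin n) : entN x a b = entN x b a := by
  rcases lt_trichotomy a b with h | rfl | h
  · rw [entN_of_lt x h, entN, dif_neg h.not_gt, dif_pos h]
  · rfl
  · rw [entN_of_lt x h, entN, dif_neg h.not_gt, dif_pos h]

lemma entN_self (a : Fin n) : entN x a a = 0 := by
  simp [entN]

lemma entN_le_one (hx : ∀ e, x e ≤ 1) (a b : Fin n) : entN x a b ≤ 1 := by
  unfold entN
  split_ifs <;> simp [hx]

lemma colorSeqN_comm (i j : Fin k) : colorSeqN z x i j = colorSeqN z x j i := by
  simp only [colorSeqN, or_comm]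

lemma entN_le_colorSeqN {a b : Fin n} (hab : a ≠ b) :
    entN x a b ≤ colorSeqN z x (z a) (z b) := by
  wlog h : a < b generalizing a b
  · rw [entN_comm, colorSeqN_comm]
    exact this hab.symm (hab.lt_or_gt.resolve_left h)
  rw [entN_of_lt x h, colorSeqN]
  refine (single_le_sum (fun _ _ => Nat.zero_le _) (mem_univ (⟨(a, b), h⟩ : Edge n))).trans' ?_
  simp

lemma colorSeqN_eq_sum_sum {i j : Fin k} (hij : i ≠ j) :
    colorSeqN z x i j =
      ∑ a ∈ univ.filter (z · = i), ∑ b ∈ univ.filter (z · = j), entN x a b := by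
  rw [colorSeqN, ← sum_filter, ← sum_product']
  refine sum_bij (fun e _ => if z e.1.1 = i then e.1 else e.1.swap) ?_ ?_ ?_ ?_
  · rintro ⟨⟨a, b⟩, hab⟩ he
    simp only [mem_filter, mem_univ, true_and] at he
    rcases he with ⟨ha, hb⟩ | ⟨ha, hb⟩
    · simp [ha, hb]
    · simp [ha, hb, hij.symm]
  · rintro ⟨⟨a, b⟩, hab⟩ he ⟨⟨a', b'⟩, hab'⟩ he' h
    simp only [mem_filter, mem_univ, true_and] at he he'
    rw [Subtype.mk.injEq]
    split_ifs at h <;> simp only [Prod.mk.injEq, Prod.swap_prod_mk] at h <;>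
      obtain ⟨rfl, rfl⟩ := h
    -- opposite orientations would force `a < b < a`
    all_goals first | rfl | exact absurd hab hab'.not_gt
  · rintro ⟨a, b⟩ hab
    simp only [mem_product, mem_filter, mem_univ, true_and] at hab
    obtain ⟨ha, hb⟩ := hab
    rcases (show a ≠ b by rintro rfl; exact hij (ha.symm.trans hb)).lt_or_gt with h | h
    · exact ⟨⟨(a, b), h⟩, by simp [ha, hb], by simp [ha]⟩
    · exact ⟨⟨(b, a), h⟩, by simp [ha, hb], by simp [hb, hij.symm]⟩
  · rintro ⟨⟨a, b⟩, hab⟩ he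
    dsimp only
    split_ifs
    · exact (entN_of_lt x hab).symm
    · rw [Prod.fst_swap, Prod.snd_swap, entN_comm]; exact (entN_of_lt x hab).symm

lemma degSeqN_eq_add_of_colorSeqN_eq_zero {a : Fin n} {i j : Fin k} (hij : i ≠ j)
    (h0 : ∀ c, c ≠ i → c ≠ j → colorSeqN z x (z a) c = 0) :
    degSeqN x a =
      ∑ b ∈ univ.filter (z · = i), entN x a b + ∑ b ∈ univ.filter (z · = j), entN x a b := by
  rw [degSeqN, sum_filter, sum_filter, ← sum_add_distrib]
  refine sum_congr rfl fun b _ => ?_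
  by_cases hbi : z b = i
  · simp [hbi, hij]
  by_cases hbj : z b = j
  · simp [hbj, Ne.symm hij]
  rw [if_neg hbi, if_neg hbj]
  rcases eq_or_ne a b with rfl | hab
  · exact entN_self x a
  · exact Nat.le_zero.mp (h0 (z b) hbi hbj ▸ entN_le_colorSeqN z x hab)

lemma sum_filter_le_degSeqN (a : Fin n) (p : Fin n → Prop) [DecidablePred p] :
    ∑ b ∈ univ.filter p, entN x a b ≤ degSeqN x a :=
  sum_le_sum_of_subset (subset_univ _)

theorem entN_eq_one_of_degSeqN_of_colorSeqN (hx : ∀ e, x e ≤ 1) {a a' v : Fin n} {j' : Fin k}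
    (hclass : univ.filter (z · = z a) = {a, a'}) (haa' : a ≠ a')
    (hdeg : degSeqN x a = 3) (hdeg' : degSeqN x a' = 1) (ha'v : entN x a' v = 1)
    (hav : z a ≠ z v) (hvj' : z v ≠ j')
    (hcol : colorSeqN z x (z a) (z v) = 2)
    (hcol0 : ∀ c, c ≠ z v → c ≠ j' → colorSeqN z x (z a) c = 0)
    (hcard : (univ.filter (z · = j')).card = 2) :
    ∀ w, z w = j' → entN x a w = 1 := by
  have hrow_partner : ∑ b ∈ univ.filter (z · = z v), entN x a' b = 1 :=
    le_antisymm (hdeg' ▸ sum_filter_le_degSeqN x a' _)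
      (ha'v ▸ single_le_sum (fun _ _ => Nat.zero_le _) (by simp))
  have hrow_v : ∑ b ∈ univ.filter (z · = z v), entN x a b = 1 := by
    rw [colorSeqN_eq_sum_sum z x hav, hclass, sum_pair haa', hrow_partner] at hcol
    omega
  have hrow_j' :
      ∑ b ∈ univ.filter (z · = j'), entN x a b = ∑ _b ∈ univ.filter (z · = j'), 1 := by
    rw [sum_const, smul_eq_mul, mul_one, hcard]
    have := degSeqN_eq_add_of_colorSeqN_eq_zero z x hvj' hcol0
    omega
  intro w hw
  exact (sum_eq_sum_iff_of_le fun b _ => entN_le_one x hx a b).mp hrow_j' w (by simp [hw])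

end Fiber

section Sign

variable {R : Type*} [CommRing R] {e : R}

lemma eq_add_one_or_eq_sub_one_iff_of_sign (he : e = 1 ∨ e = -1) (x c : R) :
    c = x + 1 ∨ c = x - 1 ↔ c = x + e ∨ c = x - e := by
  rcases he with rfl | rfl <;> simp [sub_eq_add_neg, or_comm]

lemma ne_add_of_sign (he : e = 1 ∨ e = -1) (h2 : (2 : R) ≠ 0) (x : R) : x ≠ x + e := by
  intro h
  apply h2
  rcases he with rfl | rfl
  · linear_combination -2 * h
  · linear_combination 2 * h

lemma add_ne_sub_of_sign (he : e = 1 ∨ e = -1) (h2 : (2 : R) ≠ 0) (x : R) : x + e ≠ x - e := by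
  intro h
  apply h2
  rcases he with rfl | rfl
  · linear_combination h
  · linear_combination -h

end Sign

lemma natCast_val_eq_natCast_val_iff {k : ℕ} {c d : Fin k} :
    (c.val : ZMod k) = d.val ↔ c = d := by
  rw [ZMod.natCast_eq_natCast_iff', Nat.mod_eq_of_lt c.isLt, Nat.mod_eq_of_lt d.isLt, Fin.val_inj]

lemma zmod_two_ne_zero {k : ℕ} (hk : 3 ≤ k) : (2 : ZMod k) ≠ 0 := by
  rw [← Nat.cast_ofNat, Ne, ZMod.natCast_eq_zero_iff]
  exact fun h => absurd (Nat.le_of_dvd two_pos h) (by omega)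

lemma adjacent_iff_zmod {k : ℕ} (i j : Fin k) :
    ((i.val + 1) % k = j.val ∨ (j.val + 1) % k = i.val) ↔
      ((j.val : ZMod k) = i.val + 1 ∨ (j.val : ZMod k) = i.val - 1) := by
  have hsucc (a b : Fin k) : (a.val + 1) % k = b.val ↔ (b.val : ZMod k) = a.val + 1 := by
    rw [← Nat.cast_add_one, ZMod.natCast_eq_natCast_iff', Nat.mod_eq_of_lt b.isLt, eq_comm]
  rw [hsucc, hsucc, eq_sub_iff_add_eq, eq_comm (a := (i.val : ZMod k))]

section ModColoring

variable {k : ℕ} {z : Fin (2 * k) → Fin k}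

lemma filter_color_eq (hz : ∀ a, (z a).val = a.val % k) {a a' : Fin (2 * k)} (ha : a.val < k)
    (ha' : a'.val = a.val + k) : univ.filter (z · = z a) = {a, a'} := by
  ext b
  simp only [mem_filter, mem_univ, true_and, mem_insert, mem_singleton, Fin.ext_iff, hz,
    Nat.mod_eq_of_lt ha, ha']
  rcases Nat.lt_or_ge b k with hb | hb
  · rw [Nat.mod_eq_of_lt hb]; omega
  · rw [Nat.mod_eq_sub_mod hb, Nat.mod_eq_of_lt (by omega)]; omega

lemma card_filter_color (hz : ∀ a, (z a).val = a.val % k) (c : Fin k) :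
    (univ.filter (z · = c)).card = 2 := by
  have hc : z ⟨c, by omega⟩ = c := Fin.ext (by rw [hz, Nat.mod_eq_of_lt c.isLt])
  rw [← hc, filter_color_eq hz (a' := ⟨c + k, by omega⟩) c.isLt rfl,
    card_pair (Fin.ne_of_val_ne (by dsimp only; omega))]

lemma natCast_color (hz : ∀ a, (z a).val = a.val % k) (a : Fin (2 * k)) :
    ((z a).val : ZMod k) = a.val := by
  rw [hz, ZMod.natCast_mod]

lemma color_ne_of_natCast_ne (hz : ∀ a, (z a).val = a.val % k) {a b : Fin (2 * k)}
    (h : (a.val : ZMod k) ≠ b.val) : z a ≠ z b := by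
  rwa [Ne, ← natCast_val_eq_natCast_val_iff, natCast_color hz, natCast_color hz]

lemma adjacent_color_iff (hz : ∀ a, (z a).val = a.val % k) {u v w : Fin (2 * k)} {ε : ZMod k}
    (hε : ε = 1 ∨ ε = -1) (hv : (v.val : ZMod k) = u.val + ε)
    (hw : (w.val : ZMod k) = u.val - ε) (c : Fin k) :
    ((z u).val + 1) % k = c.val ∨ (c.val + 1) % k = (z u).val ↔ c = z v ∨ c = z w := by
  rw [adjacent_iff_zmod, natCast_color hz, eq_add_one_or_eq_sub_one_iff_of_sign hε, ← hv, ← hw,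
    ← natCast_color hz v, ← natCast_color hz w, natCast_val_eq_natCast_val_iff,
    natCast_val_eq_natCast_val_iff]

end ModColoring

/-- Claim 1. For every `γ` in the simple fiber: if `u ∈ {1,…,k}`,
`v ∈ {1,…,2k}`, `ε ∈ {1,−1}` satisfy `v ≡ u + ε (mod k)` and `γ_{(u+k)v} = 1`, then
`γ_{uw} = 1` for every `w` with `w ≡ u − ε (mod k)`. -/
theorem claim_one (k : ℕ) (hk : 3 ≤ k) (γ : Edge (2 * k) → ℕ)
    (hγ : γ ∈ SimpleFiber
      (fun u : Fin (2 * k) => (⟨u.val % k, Nat.mod_lt _ (by omega)⟩ : Fin k))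
      (fun u : Fin (2 * k) => if u.val < k then 3 else 1)
      (fun i j : Fin k =>
        if (i.val + 1) % k = j.val ∨ (j.val + 1) % k = i.val then 2 else 0))
    (u : Fin (2 * k)) (hu : u.val < k) (v : Fin (2 * k)) (ε : ℤ)
    (hε : ε = 1 ∨ ε = -1)
    (hv : Int.ModEq (k : ℤ) (v.val : ℤ) ((u.val : ℤ) + ε))
    (huv : entN γ ⟨u.val + k, by omega⟩ v = 1) :
    ∀ w : Fin (2 * k), Int.ModEq (k : ℤ) (w.val : ℤ) ((u.val : ℤ) - ε) →
      entN γ u w = 1 := by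
  intro w hw
  obtain ⟨⟨hdeg, hcol⟩, hx⟩ := hγ
  beta_reduce at hdeg hcol
  set z : Fin (2 * k) → Fin k := fun u => ⟨u.val % k, Nat.mod_lt _ (by omega)⟩
  have hz : ∀ a, (z a).val = a.val % k := fun _ => rfl
  have hε' : (ε : ZMod k) = 1 ∨ (ε : ZMod k) = -1 := by rcases hε with rfl | rfl <;> simp
  have hv' : (v.val : ZMod k) = u.val + ε := by
    simpa using (ZMod.intCast_eq_intCast_iff _ _ k).mpr hv
  have hw' : (w.val : ZMod k) = u.val - ε := by
    simpa using (ZMod.intCast_eq_intCast_iff _ _ k).mpr hw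
  have hnbr := adjacent_color_iff hz hε' hv' hw'
  have hdegN (a : Fin (2 * k)) : degSeqN γ a = if a.val < k then 3 else 1 := by
    exact_mod_cast hdeg a
  have hcolN (i j : Fin k) : colorSeqN z γ i j =
      if (i.val + 1) % k = j.val ∨ (j.val + 1) % k = i.val then 2 else 0 := by
    exact_mod_cast hcol i j
  refine entN_eq_one_of_degSeqN_of_colorSeqN z γ hx (filter_color_eq hz hu rfl)
    (Fin.ne_of_val_ne (by dsimp only; omega)) (by simp [hdegN, hu]) (by simp [hdegN]) huv
    (color_ne_of_natCast_ne hz (hv' ▸ ne_add_of_sign hε' (zmod_two_ne_zero hk) _))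
    (color_ne_of_natCast_ne hz (hv' ▸ hw' ▸ add_ne_sub_of_sign hε' (zmod_two_ne_zero hk) _))
    ?_ ?_ (card_filter_color hz _) w rfl
  · rw [hcolN, if_pos ((hnbr _).2 (Or.inl rfl))]
  · intro c hcv hcw
    rw [hcolN, if_neg (by rw [hnbr]; tauto)]
end
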